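/- Let μ be a Borel probability measure on ℝ³ with compact support and let C : ℝ³ → ℝ³ be a bounded Borel measurable map. Define the 3 × 3 real matrix A := ∫ x (C x)ᵀ dμ(x), i.e. A_{ij} = ∫ x_i (C x)_j dμ(x). Then the infimum over all orthogonal transformations U of ℝ³ of ∫ ‖U x − C(x)‖² dμ(x) is attained and equals ∫ ‖x‖² dμ(x) + ∫ ‖C(x)‖² dμ(x) − 2 · trace(√(Aᵀ A)), where √(Aᵀ A) is the positive semidefinite square root of Aᵀ A (so trace(√(Aᵀ A)) is the sum of the singular values of A). -/

import Mathlib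

/-!
Expanding the square, `∫ ‖U x - C x‖² = ∫ ‖x‖² + ∫ ‖C x‖² - 2 tr (U A)` for every orthogonal
`U`, so it suffices to maximise `tr (U A)`. By the polar decomposition `A = W S` with
`S = √(Aᵀ A)` and `W` orthogonal, `tr (U A) = tr (U W S)`; writing `S = V D Vᵀ`, this is
`∑ (Vᵀ U W V)ᵢᵢ dᵢ ≤ ∑ dᵢ = tr S`, because the entries of an orthogonal matrix are bounded by `1`.
Equality holds at `U = W⁻¹`.
-/

open MeasureTheory Matrix

noncomputable section

local notation "E3" => EuclideanSpace ℝ (Fin 3)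

open scoped ComplexOrder in
/-- The square root of a positive semidefinite matrix, as `Matrix.PosSemidef.sqrt` was defined
in Mathlib of December 2024 (since removed in favour of `CFC.sqrt`). -/
def Matrix.PosSemidef.sqrt {n 𝕜 : Type*} [Fintype n] [RCLike 𝕜] [DecidableEq n]
    {A : Matrix n n 𝕜} (hA : A.PosSemidef) : Matrix n n 𝕜 :=
  (hA.1.eigenvectorUnitary : Matrix n n 𝕜) *
    diagonal (fun i => ((√(hA.1.eigenvalues i) : ℝ) : 𝕜)) *
    (star hA.1.eigenvectorUnitary : Matrix n n 𝕜)

section Sqrt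

open scoped ComplexOrder

variable {n 𝕜 : Type*} [Fintype n] [RCLike 𝕜] [DecidableEq n] {A : Matrix n n 𝕜}

theorem Matrix.PosSemidef.sqrt_mul_self (hA : A.PosSemidef) : hA.sqrt * hA.sqrt = A := by
  have hU := Matrix.UnitaryGroup.star_mul_self hA.1.eigenvectorUnitary
  have hD : diagonal (fun i => ((√(hA.1.eigenvalues i) : ℝ) : 𝕜))
      * diagonal (fun i => ((√(hA.1.eigenvalues i) : ℝ) : 𝕜))
      = diagonal (RCLike.ofReal ∘ hA.1.eigenvalues) := by
    rw [diagonal_mul_diagonal]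
    congr 1; funext i
    simp [← RCLike.ofReal_mul, Real.mul_self_sqrt (hA.eigenvalues_nonneg i)]
  conv_rhs => rw [hA.1.spectral_theorem]
  simp only [Matrix.PosSemidef.sqrt, Matrix.mul_assoc] at hU ⊢
  rw [← Matrix.mul_assoc (star _) _ _, hU, Matrix.one_mul, ← Matrix.mul_assoc _ _ (star _), hD]
  simp [Unitary.conjStarAlgAut_apply, Matrix.mul_assoc]

theorem Matrix.PosSemidef.posSemidef_sqrt (hA : A.PosSemidef) : hA.sqrt.PosSemidef := by
  simpa [Matrix.PosSemidef.sqrt, Matrix.star_eq_conjTranspose] using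
    (PosSemidef.diagonal (fun i => RCLike.ofReal_nonneg.mpr (Real.sqrt_nonneg (hA.1.eigenvalues i)))
      ).mul_mul_conjTranspose_same (hA.1.eigenvectorUnitary : Matrix n n 𝕜)

end Sqrt

theorem LinearIsometryEquiv.exists_apply_eq_of_norm_eq {𝕜 E : Type*} [RCLike 𝕜]
    [NormedAddCommGroup E] [InnerProductSpace 𝕜 E] [FiniteDimensional 𝕜 E]
    (f g : E →ₗ[𝕜] E) (hfg : ∀ x, ‖f x‖ = ‖g x‖) : ∃ W : E ≃ₗᵢ[𝕜] E, ∀ x, W (f x) = g x := by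
  have hker : LinearMap.ker f ≤ LinearMap.ker g := fun x hx => by
    rw [LinearMap.mem_ker, ← norm_eq_zero, ← hfg, norm_eq_zero, ← LinearMap.mem_ker]
    exact hx
  set φ : LinearMap.range f →ₗ[𝕜] E :=
    (LinearMap.ker f).liftQ g hker ∘ₗ f.quotKerEquivRange.symm.toLinearMap
  have hφ : ∀ x, φ (f.rangeRestrict x) = g x := fun x => by
    have : f.quotKerEquivRange (Submodule.Quotient.mk x) = f.rangeRestrict x :=
      Subtype.ext (f.quotKerEquivRange_apply_mk x)
    simp [φ, ← this]
  have hφ_norm : ∀ y, ‖φ y‖ = ‖y‖ := by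
    rintro ⟨_, x, rfl⟩
    exact (congrArg norm (hφ x)).trans (hfg x).symm
  refine ⟨(LinearIsometry.extend ⟨φ, hφ_norm⟩).toLinearIsometryEquiv rfl, fun x => ?_⟩
  exact (LinearIsometry.extend_apply _ (f.rangeRestrict x)).trans (hφ x)

section EuclideanMatrix
variable {n 𝕜 : Type*} [Fintype n] [DecidableEq n] [RCLike 𝕜]

def Matrix.ofLinearIsometryEquiv :
    (EuclideanSpace 𝕜 n ≃ₗᵢ[𝕜] EuclideanSpace 𝕜 n) →* unitaryGroup n 𝕜 :=
  (Unitary.map (StarMonoidHom.ofClass (toEuclideanCLM (n := n) (𝕜 := 𝕜)).symm)).toMonoidHom.comp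
    Unitary.linearIsometryEquiv.symm.toMonoidHom

@[simp]
theorem Matrix.toEuclideanCLM_ofLinearIsometryEquiv
    (U : EuclideanSpace 𝕜 n ≃ₗᵢ[𝕜] EuclideanSpace 𝕜 n) :
    toEuclideanCLM (n := n) (𝕜 := 𝕜) (ofLinearIsometryEquiv U) = U := by
  simp [ofLinearIsometryEquiv]

theorem Matrix.norm_toEuclideanCLM_sq (M : Matrix n n 𝕜) (x : EuclideanSpace 𝕜 n) :
    ‖toEuclideanCLM (𝕜 := 𝕜) M x‖ ^ 2
      = RCLike.re (inner 𝕜 (toEuclideanCLM (𝕜 := 𝕜) (Mᴴ * M) x) x) := by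
  rw [map_mul, ← star_eq_conjTranspose, map_star]
  exact ContinuousLinearMap.apply_norm_sq_eq_inner_adjoint_left _ x

theorem Matrix.exists_ofLinearIsometryEquiv_mul_eq {A S : Matrix n n 𝕜} (h : Sᴴ * S = Aᴴ * A) :
    ∃ W, ((ofLinearIsometryEquiv W : unitaryGroup n 𝕜) : Matrix n n 𝕜) * S = A := by
  obtain ⟨W, hW⟩ := LinearIsometryEquiv.exists_apply_eq_of_norm_eq
    (toEuclideanCLM (𝕜 := 𝕜) S : EuclideanSpace 𝕜 n →ₗ[𝕜] _) (toEuclideanCLM (𝕜 := 𝕜) A) fun x => by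
      rw [← sq_eq_sq₀ (norm_nonneg _) (norm_nonneg _)]
      simp only [ContinuousLinearMap.coe_coe, norm_toEuclideanCLM_sq, h]
  refine ⟨W, (toEuclideanCLM (n := n) (𝕜 := 𝕜)).injective (ContinuousLinearMap.ext fun x => ?_)⟩
  change toEuclideanCLM (𝕜 := 𝕜) (_ * S) x = toEuclideanCLM (𝕜 := 𝕜) A x
  rw [map_mul, mul_apply_eq_comp, toEuclideanCLM_ofLinearIsometryEquiv]
  exact hW x

end EuclideanMatrix

theorem Matrix.trace_mul_le_trace_of_mem_unitaryGroup {n : Type*} [Fintype n] [DecidableEq n]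
    {O S : Matrix n n ℝ} (hO : O ∈ unitaryGroup n ℝ) (hS : S.PosSemidef) :
    (O * S).trace ≤ S.trace := by
  set V : unitaryGroup n ℝ := hS.1.eigenvectorUnitary
  set d := hS.1.eigenvalues
  have hV : star (V : Matrix n n ℝ) * V = 1 := Matrix.UnitaryGroup.star_mul_self V
  have hSV : S = V * diagonal d * star (V : Matrix n n ℝ) := by simpa using hS.1.spectral_theorem
  set P := star (V : Matrix n n ℝ) * O * V
  have hP : P ∈ unitaryGroup n ℝ := mul_mem (mul_mem (Unitary.star_mem V.2) hO) V.2
  have hOS : (O * S).trace = ∑ i, P i i * d i := by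
    rw [hSV, ← Matrix.mul_assoc, ← Matrix.mul_assoc, Matrix.trace_mul_comm]
    simp only [P, Matrix.mul_assoc]
    simp [Matrix.trace, ← Matrix.mul_assoc, Matrix.mul_diagonal]
  have hS_trace : S.trace = ∑ i, d i := by
    rw [hSV, Matrix.trace_mul_cycle, hV, Matrix.one_mul, Matrix.trace_diagonal]
  rw [hOS, hS_trace]
  refine Finset.sum_le_sum fun i _ => mul_le_of_le_one_left (hS.eigenvalues_nonneg i) ?_
  exact (le_abs_self _).trans (by simpa using entry_norm_bound_of_unitary hP i i)

namespace MeasureTheory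
variable {α : Type*} [MeasurableSpace α] {μ : Measure α}

theorem MemLp.integrable_inner {E : Type*} [NormedAddCommGroup E] [InnerProductSpace ℝ E]
    {f g : α → E} (hf : MemLp f 2 μ) (hg : MemLp g 2 μ) :
    Integrable (fun x => inner ℝ (f x) (g x)) μ :=
  (L2.integrable_inner (hf.toLp f) (hg.toLp g)).congr <| by
    filter_upwards [hf.coeFn_toLp, hg.coeFn_toLp] with x hfx hgx
    rw [hfx, hgx]

theorem integral_norm_sub_sq {E : Type*} [NormedAddCommGroup E] [InnerProductSpace ℝ E]
    {f g : α → E} (hf : MemLp f 2 μ) (hg : MemLp g 2 μ) :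
    ∫ x, ‖f x - g x‖ ^ 2 ∂μ
      = (∫ x, ‖f x‖ ^ 2 ∂μ) + (∫ x, ‖g x‖ ^ 2 ∂μ) - 2 * ∫ x, inner ℝ (f x) (g x) ∂μ := by
  have hf2 : Integrable (fun x => ‖f x‖ ^ 2) μ := hf.integrable_norm_pow two_ne_zero
  have hg2 : Integrable (fun x => ‖g x‖ ^ 2) μ := hg.integrable_norm_pow two_ne_zero
  have hfg : Integrable (fun x => 2 * inner ℝ (f x) (g x)) μ :=
    (hf.integrable_inner hg).const_mul 2
  simp_rw [norm_sub_sq_real]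
  rw [integral_add (by exact hf2.sub hfg) hg2, integral_sub hf2 hfg, integral_const_mul]
  ring

variable {ι : Type*} [Fintype ι] [DecidableEq ι]

theorem integral_inner_toEuclideanCLM {f g : α → EuclideanSpace ℝ ι} (hf : MemLp f 2 μ)
    (hg : MemLp g 2 μ) (M : Matrix ι ι ℝ) :
    ∫ x, inner ℝ (toEuclideanCLM (𝕜 := ℝ) M (f x)) (g x) ∂μ
      = (M * of fun i j => ∫ x, f x i * g x j ∂μ).trace := by
  have hcoord : ∀ i j, Integrable (fun x => f x i * g x j) μ := fun i j =>
    (hf.continuousLinearMap_comp (EuclideanSpace.proj (𝕜 := ℝ) i)).integrable_mul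
      (p := 2) (q := 2) (hg.continuousLinearMap_comp (EuclideanSpace.proj (𝕜 := ℝ) j))
  have hinner : ∀ x, inner ℝ (toEuclideanCLM (𝕜 := ℝ) M (f x)) (g x)
      = ∑ j, ∑ i, M j i * (f x i * g x j) := fun x => by
    rw [real_inner_comm, inner_toEuclideanCLM]
    simp only [dotProduct, mulVec, Finset.mul_sum]
    exact Finset.sum_congr rfl fun j _ => Finset.sum_congr rfl fun i _ => by ring
  simp_rw [hinner]
  rw [integral_finsetSum _ fun j _ =>
    integrable_finsetSum _ fun i _ => (hcoord i j).const_mul (M j i)]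
  simp only [integral_finsetSum _ fun i _ => (hcoord i _).const_mul _, integral_const_mul]
  simp [Matrix.trace, Matrix.mul_apply]

theorem integral_norm_linearIsometryEquiv_sub_sq {f g : α → EuclideanSpace ℝ ι}
    (hf : MemLp f 2 μ) (hg : MemLp g 2 μ) (U : EuclideanSpace ℝ ι ≃ₗᵢ[ℝ] EuclideanSpace ℝ ι) :
    ∫ x, ‖U (f x) - g x‖ ^ 2 ∂μ = (∫ x, ‖f x‖ ^ 2 ∂μ) + (∫ x, ‖g x‖ ^ 2 ∂μ)
      - 2 * ((ofLinearIsometryEquiv U : Matrix ι ι ℝ) *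
          of fun i j => ∫ x, f x i * g x j ∂μ).trace := by
  rw [← integral_inner_toEuclideanCLM hf hg, toEuclideanCLM_ofLinearIsometryEquiv]
  simpa using integral_norm_sub_sq (hf.continuousLinearMap_comp (U : _ →L[ℝ] _)) hg

end MeasureTheory

theorem Matrix.isGreatest_trace_ofLinearIsometryEquiv_mul {n : Type*} [Fintype n] [DecidableEq n]
    {A : Matrix n n ℝ} (hA : (Aᵀ * A).PosSemidef) :
    IsGreatest (Set.range fun U : EuclideanSpace ℝ n ≃ₗᵢ[ℝ] EuclideanSpace ℝ n =>
        ((ofLinearIsometryEquiv U : Matrix n n ℝ) * A).trace)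
      hA.sqrt.trace := by
  have hS := hA.posSemidef_sqrt
  obtain ⟨W, hW⟩ := exists_ofLinearIsometryEquiv_mul_eq (A := A) (S := hA.sqrt) <| by
    rw [hS.1.eq, hA.sqrt_mul_self, conjTranspose_eq_transpose_of_trivial]
  have htrace (U : EuclideanSpace ℝ n ≃ₗᵢ[ℝ] EuclideanSpace ℝ n) :
      ((ofLinearIsometryEquiv U : Matrix n n ℝ) * A).trace
        = ((ofLinearIsometryEquiv (U * W) : Matrix n n ℝ) * hA.sqrt).trace := by
    rw [map_mul, Submonoid.coe_mul, Matrix.mul_assoc, hW]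
  refine ⟨⟨W⁻¹, ?_⟩, ?_⟩
  · change (_ * A).trace = _
    rw [htrace, inv_mul_cancel, map_one, Submonoid.coe_one, Matrix.one_mul]
  · rintro _ ⟨U, rfl⟩
    change (_ * A).trace ≤ _
    rw [htrace]
    exact trace_mul_le_trace_of_mem_unitaryGroup (SetLike.coe_mem _) hS

/-- For a compactly supported Borel probability measure `μ` on `ℝ³`, a bounded
Borel map `C`, and the matrix `A` with entries `A i j = ∫ xᵢ (C x)ⱼ dμ(x)`, the infimum of
`∫ ‖U x − C x‖² dμ` over orthogonal transformations `U` is attained, and equals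
`∫ ‖x‖² dμ + ∫ ‖C x‖² dμ − 2 · trace √(Aᵀ A)`. -/
theorem optimal_orthogonal_value
    (μ : Measure E3) [IsProbabilityMeasure μ]
    (K : Set E3) (hK : IsCompact K) (hμK : μ Kᶜ = 0)
    (C : E3 → E3) (hCmeas : Measurable C) (B : ℝ) (hCbdd : ∀ x, ‖C x‖ ≤ B)
    (A : Matrix (Fin 3) (Fin 3) ℝ)
    (hAdef : ∀ i j, A i j = ∫ x, x i * C x j ∂μ)
    (hA : (Aᵀ * A).PosSemidef) :
    ∃ Ustar : E3 ≃ₗᵢ[ℝ] E3,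
      (∀ U : E3 ≃ₗᵢ[ℝ] E3,
        ∫ x, ‖Ustar x - C x‖ ^ 2 ∂μ ≤ ∫ x, ‖U x - C x‖ ^ 2 ∂μ) ∧
      ∫ x, ‖Ustar x - C x‖ ^ 2 ∂μ
        = (∫ x, ‖x‖ ^ 2 ∂μ) + (∫ x, ‖C x‖ ^ 2 ∂μ) - 2 * hA.sqrt.trace := by
  have hx : MemLp (fun x : E3 => x) 2 μ := by
    obtain ⟨R, hR⟩ := isBounded_iff_forall_norm_le.mp hK.isBounded
    refine .of_bound aestronglyMeasurable_id R ?_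
    filter_upwards [measure_eq_zero_iff_ae_notMem.mp hμK] with x hxK
    exact hR x (not_not.mp hxK)
  have hC : MemLp C 2 μ := .of_bound hCmeas.aestronglyMeasurable B (ae_of_all _ hCbdd)
  have hval (U : E3 ≃ₗᵢ[ℝ] E3) : ∫ x, ‖U x - C x‖ ^ 2 ∂μ = (∫ x, ‖x‖ ^ 2 ∂μ)
      + (∫ x, ‖C x‖ ^ 2 ∂μ)
      - 2 * ((ofLinearIsometryEquiv U : Matrix (Fin 3) (Fin 3) ℝ) * A).trace := by
    rw [show A = of fun i j => ∫ x, x i * C x j ∂μ from Matrix.ext hAdef]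
    exact integral_norm_linearIsometryEquiv_sub_sq hx hC U
  obtain ⟨⟨W, hW⟩, hmax⟩ := isGreatest_trace_ofLinearIsometryEquiv_mul hA
  dsimp only at hW
  refine ⟨W, fun U => ?_, by rw [hval, hW]⟩
  rw [hval, hval, hW]
  linarith [hmax ⟨U, rfl⟩]
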